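/- Let u ∈ ℝ^M and v ∈ ℝ^N be unit vectors and σ > 0, and set C = σuvᵀ. Then there exist δ > 0 and Λ ≥ 0 such that for every E ∈ ℝ^{M×N} with ‖E‖_F ≤ δ, the squared largest singular value of the perturbed matrix satisfies | ‖C + E‖_op² − (σ + uᵀEv)² − ‖(I_M − uuᵀ)Ev‖² − ‖(I_N − vvᵀ)Eᵀu‖² | ≤ Λ · ‖E‖_F³. -/
import Mathlib

set_option maxHeartbeats 1000000


open scoped BigOperators
open Matrix

noncomputable section

/-- Squared Frobenius norm of a real matrix: `‖A‖_F² = ∑ᵢⱼ A i j ^ 2`. -/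
def frobSq {M N : ℕ} (A : Matrix (Fin M) (Fin N) ℝ) : ℝ := ∑ i, ∑ j, A i j ^ 2

/-- Squared Euclidean norm of a vector. -/
def vnormSq {n : ℕ} (x : Fin n → ℝ) : ℝ := ∑ i, x i ^ 2

/-- Euclidean inner product of two vectors. -/
def vdot {n : ℕ} (x y : Fin n → ℝ) : ℝ := ∑ i, x i * y i

/-- The spectral (ℓ²-operator) norm of a real matrix:
`‖A‖_op = sup { ‖Ax‖ : ‖x‖ = 1 }`, which equals the largest singular value. -/
def opNorm {M N : ℕ} (A : Matrix (Fin M) (Fin N) ℝ) : ℝ :=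
  sSup {r : ℝ | ∃ x : Fin N → ℝ, vnormSq x = 1 ∧ r = Real.sqrt (vnormSq (A.mulVec x))}

namespace S9aux
variable {m n : ℕ}

lemma vnormSq_nonneg (x : Fin n → ℝ) : 0 ≤ vnormSq x :=
  Finset.sum_nonneg fun _ _ => sq_nonneg _

lemma frobSq_nonneg (A : Matrix (Fin m) (Fin n) ℝ) : 0 ≤ frobSq A :=
  Finset.sum_nonneg fun _ _ => Finset.sum_nonneg fun _ _ => sq_nonneg _

lemma frobSq_transpose (A : Matrix (Fin m) (Fin n) ℝ) : frobSq Aᵀ = frobSq A := by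
  simp only [frobSq, Matrix.transpose_apply]
  rw [Finset.sum_comm]

lemma vdot_comm (x y : Fin n → ℝ) : vdot x y = vdot y x := by
  simp [vdot, mul_comm]

lemma vdot_add_right (x y z : Fin n → ℝ) : vdot x (y + z) = vdot x y + vdot x z := by
  simp [vdot, mul_add, Finset.sum_add_distrib]

lemma vdot_sub_right (x y z : Fin n → ℝ) : vdot x (y - z) = vdot x y - vdot x z := by
  simp [vdot, mul_sub, Finset.sum_sub_distrib]

lemma vdot_smul_right (c : ℝ) (x y : Fin n → ℝ) : vdot x (c • y) = c * vdot x y := by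
  simp [vdot, Finset.mul_sum]; apply Finset.sum_congr rfl; intros; ring

lemma vdot_smul_left (c : ℝ) (x y : Fin n → ℝ) : vdot (c • x) y = c * vdot x y := by
  simp [vdot, Finset.mul_sum]; apply Finset.sum_congr rfl; intros; ring

lemma vdot_add_left (x y z : Fin n → ℝ) : vdot (x + y) z = vdot x z + vdot y z := by
  rw [vdot_comm, vdot_add_right, vdot_comm z x, vdot_comm z y]

lemma vdot_sub_left (x y z : Fin n → ℝ) : vdot (x - y) z = vdot x z - vdot y z := by
  rw [vdot_comm, vdot_sub_right, vdot_comm z x, vdot_comm z y]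

lemma vnormSq_eq_vdot (x : Fin n → ℝ) : vnormSq x = vdot x x := by
  simp [vnormSq, vdot, sq]

lemma vnormSq_add (x y : Fin n → ℝ) :
    vnormSq (x + y) = vnormSq x + 2 * vdot x y + vnormSq y := by
  simp only [vnormSq, vdot, Pi.add_apply]
  rw [Finset.mul_sum, ← Finset.sum_add_distrib, ← Finset.sum_add_distrib]
  apply Finset.sum_congr rfl; intros; ring

lemma vnormSq_smul (c : ℝ) (x : Fin n → ℝ) : vnormSq (c • x) = c ^ 2 * vnormSq x := by
  simp only [vnormSq, Pi.smul_apply, smul_eq_mul, Finset.mul_sum]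
  apply Finset.sum_congr rfl; intros; ring

lemma cauchy (x y : Fin n → ℝ) : (vdot x y) ^ 2 ≤ vnormSq x * vnormSq y :=
  Finset.sum_mul_sq_le_sq_mul_sq _ _ _

lemma abs_vdot_le (x y : Fin n → ℝ) :
    |vdot x y| ≤ Real.sqrt (vnormSq x) * Real.sqrt (vnormSq y) := by
  rw [← Real.sqrt_mul (vnormSq_nonneg x), ← Real.sqrt_sq_eq_abs]
  exact Real.sqrt_le_sqrt (cauchy x y)

lemma mul_le_of_abs (b g K : ℝ) (hb : |b| ≤ 1) (hg : |g| ≤ K) : b * g ≤ K := by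
  calc b * g ≤ |b * g| := le_abs_self _
    _ = |b| * |g| := abs_mul _ _
    _ ≤ 1 * K := mul_le_mul hb hg (abs_nonneg _) zero_le_one
    _ = K := one_mul _

lemma sq_le_of_abs (g K : ℝ) (hg : |g| ≤ K) : g ^ 2 ≤ K ^ 2 := by
  have h := abs_le.1 hg
  nlinarith [h.1, h.2]

lemma e1_lemma (s β g nb t : ℝ) (hs : 0 ≤ s) (hβ : |β| ≤ 1) (hg : |g| ≤ nb * t) :
    (β * s + g) ^ 2 ≤ β^2*s^2 + 2*s*(nb*t) + nb^2*t^2 := by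
  have h1 : β * g ≤ nb * t := mul_le_of_abs β g (nb*t) hβ hg
  have h3 : g ^ 2 ≤ (nb*t) ^ 2 := sq_le_of_abs g (nb*t) hg
  have h4 : s * (β * g) ≤ s * (nb * t) := mul_le_mul_of_nonneg_left h1 hs
  nlinarith [h3, h4]

lemma vdot_mulVec (x : Fin m → ℝ) (A : Matrix (Fin m) (Fin n) ℝ) (y : Fin n → ℝ) :
    vdot x (A.mulVec y) = vdot (Aᵀ.mulVec x) y := by
  simp only [vdot, Matrix.mulVec, dotProduct, Matrix.transpose_apply]
  simp_rw [Finset.mul_sum, Finset.sum_mul]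
  rw [Finset.sum_comm]
  apply Finset.sum_congr rfl; intros; apply Finset.sum_congr rfl; intros; ring

lemma mulVec_normSq_le (A : Matrix (Fin m) (Fin n) ℝ) (x : Fin n → ℝ) :
    vnormSq (A.mulVec x) ≤ frobSq A * vnormSq x := by
  simp only [vnormSq, Matrix.mulVec, dotProduct, frobSq]
  rw [Finset.sum_mul]
  apply Finset.sum_le_sum
  intro i _
  exact Finset.sum_mul_sq_le_sq_mul_sq _ _ _

lemma vecMulVec_mulVec (a : Fin m → ℝ) (b x : Fin n → ℝ) :
    (vecMulVec a b).mulVec x = (vdot b x) • a := by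
  funext i
  simp only [Matrix.mulVec, dotProduct, Matrix.vecMulVec_apply, vdot,
    Pi.smul_apply, smul_eq_mul, Finset.sum_mul]
  apply Finset.sum_congr rfl; intros; ring

lemma proj_normSq (u w : Fin n → ℝ) (hu : vnormSq u = 1) :
    vnormSq (w - vdot u w • u) = vnormSq w - (vdot u w) ^ 2 := by
  rw [sub_eq_add_neg, ← neg_smul, vnormSq_add, vnormSq_smul, vdot_smul_right,
    vdot_comm w u, hu]
  ring

lemma key_upper (σ s na nb ε t β : ℝ) (hσ : 0 < σ) (hε0 : 0 ≤ ε) (hεδ : ε ≤ σ/8)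
    (hna0 : 0 ≤ na) (hna : na ≤ ε) (hnb0 : 0 ≤ nb) (hnb : nb ≤ ε)
    (hs1 : σ - ε ≤ s) (ht0 : 0 ≤ t) (hβt : β^2 + t^2 = 1) :
    β^2*s^2 + 2*s*nb*t + nb^2*t^2 + β^2*na^2 + 2*na*ε*t + ε^2*t^2
      ≤ s^2 + na^2 + nb^2 + (80/σ)*ε^3 := by
  have hs : 7*σ/8 ≤ s := by linarith
  have hs0 : 0 < s := by linarith
  have hεs : ε ≤ s/7 := by linarith
  have ht1 : t ≤ 1 := by nlinarith [sq_nonneg β]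
  have hβ2 : β^2 = 1 - t^2 := by linarith
  have hnb2 : nb^2 ≤ ε^2 := by nlinarith
  have hna2 : na^2 ≤ ε^2 := by nlinarith
  have htt : t^2 ≤ t := by nlinarith
  have c2 : nb^2*t^2 ≤ ε^2*t^2 := mul_le_mul_of_nonneg_right hnb2 (sq_nonneg t)
  have main : (β^2*s^2 + 2*s*nb*t + nb^2*t^2 + β^2*na^2 + 2*na*ε*t + ε^2*t^2
      - (s^2 + na^2 + nb^2)) * σ ≤ 80*ε^3 := by
    rw [hβ2]
    rcases le_or_gt (s*t) (4*ε) with h | h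
    · have c1 : 0 ≤ (s*t - nb)^2 := sq_nonneg _
      have c3 : 2*na*ε*t ≤ 2*ε^2*t := by nlinarith [mul_nonneg hε0 ht0]
      have c4 : σ*(ε^2*t) ≤ (32/7)*ε^3 := by
        have h7 : σ ≤ 8*s/7 := by linarith
        calc σ*(ε^2*t) ≤ (8*s/7)*(ε^2*t) :=
              mul_le_mul_of_nonneg_right h7 (mul_nonneg (sq_nonneg ε) ht0)
          _ = (8/7)*((s*t)*ε^2) := by ring
          _ ≤ (8/7)*((4*ε)*ε^2) := by
              have := mul_le_mul_of_nonneg_right h (sq_nonneg ε)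
              linarith
          _ = (32/7)*ε^3 := by ring
      have c5 : σ*(ε^2*t^2) ≤ σ*(ε^2*t) :=
        mul_le_mul_of_nonneg_left (mul_le_mul_of_nonneg_left htt (sq_nonneg ε)) hσ.le
      nlinarith [mul_nonneg c1 hσ.le, mul_le_mul_of_nonneg_right c2 hσ.le,
        mul_le_mul_of_nonneg_right c3 hσ.le,
        mul_nonneg (mul_nonneg (mul_nonneg hna0 hna0) (mul_nonneg ht0 ht0)) hσ.le]
    · have hst : 4*ε ≤ s*t := h.le
      have d1 : 2*ε^2*t ≤ (1/2)*s*ε*t^2 := by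
        have := mul_nonneg (sub_nonneg.2 hst) (mul_nonneg hε0 ht0)
        nlinarith [this]
      have d2 : (1/2)*s*ε*t^2 ≤ (1/14)*s^2*t^2 := by
        have h1 : ε*t^2 ≤ (s/7)*t^2 := mul_le_mul_of_nonneg_right hεs (sq_nonneg t)
        have h2 := mul_le_mul_of_nonneg_left h1 hs0.le
        nlinarith [h2]
      have d3 : 2*na*ε*t ≤ 2*ε^2*t := by nlinarith [mul_nonneg hε0 ht0]
      have d4 : ε^2*t^2 ≤ (1/49)*s^2*t^2 := by
        have h1 : ε^2 ≤ (s/7)^2 := by nlinarith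
        have := mul_le_mul_of_nonneg_right h1 (sq_nonneg t)
        nlinarith [this]
      have d5 : (9/16)*(s^2*t^2) ≤ (s*t - nb)^2 := by
        have h1 : nb ≤ (1/4)*(s*t) := by linarith
        have h2 : 0 ≤ s*t := mul_nonneg hs0.le ht0
        nlinarith
      have expr_le : (1-t^2)*s^2 + 2*s*nb*t + nb^2*t^2 + (1-t^2)*na^2 + 2*na*ε*t + ε^2*t^2
          - (s^2 + na^2 + nb^2) ≤ 0 := by
        nlinarith [sq_nonneg (na*t)]
      have h80 : (0:ℝ) ≤ 80*ε^3 := by positivity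
      nlinarith [mul_nonpos_of_nonpos_of_nonneg expr_le hσ.le]
  have h2 : (β^2*s^2 + 2*s*nb*t + nb^2*t^2 + β^2*na^2 + 2*na*ε*t + ε^2*t^2
      - (s^2 + na^2 + nb^2)) ≤ 80*ε^3/σ := by
    rw [le_div_iff₀ hσ]; exact main
  have h3 : (80/σ)*ε^3 = 80*ε^3/σ := by ring
  linarith

lemma key_lower (σ s na nb ε : ℝ) (hσ : 0 < σ) (hε0 : 0 ≤ ε) (hεδ : ε ≤ σ/8)
    (hna0 : 0 ≤ na) (hna : na ≤ ε) (hnb0 : 0 ≤ nb) (hnb : nb ≤ ε)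
    (hs1 : σ - ε ≤ s) (hs2 : s ≤ σ + ε) :
    (s^2 + na^2 + nb^2 - (80/σ)*ε^3) * (s^2 + nb^2)
      ≤ (s^2 + nb^2)^2 + s^2*na^2 - 2*s*ε^3 := by
  have hs : 7*σ/8 ≤ s := by linarith
  have hs0 : 0 < s := by linarith
  have hε3 : 0 ≤ ε^3 := by positivity
  have hna2 : na^2 ≤ ε^2 := by nlinarith
  have hnb2 : nb^2 ≤ ε^2 := by nlinarith
  have key : σ*(na^2*nb^2 + 2*s*ε^3) ≤ 80*ε^3*(s^2+nb^2) := by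
    have e1 : na^2*nb^2 ≤ ε^2*ε^2 :=
      mul_le_mul hna2 hnb2 (sq_nonneg nb) (sq_nonneg ε)
    have e2 : ε^2*ε^2 ≤ (σ/8)*ε^3 := by nlinarith
    have e3 : σ*(na^2*nb^2) ≤ (σ^2/8)*ε^3 := by nlinarith
    have e4 : σ*(2*s*ε^3) ≤ (9/4)*σ^2*ε^3 := by nlinarith
    have hr : (7*σ/8)^2 ≤ s^2 := by nlinarith
    have e5 : (49/64)*σ^2*ε^3 ≤ s^2*ε^3 := by
      nlinarith [mul_le_mul_of_nonneg_right hr hε3]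
    nlinarith [mul_nonneg (sq_nonneg nb) hε3]
  have key2 : na^2*nb^2 + 2*s*ε^3 ≤ (80/σ)*ε^3*(s^2+nb^2) := by
    rw [show (80/σ)*ε^3*(s^2+nb^2) = (80*ε^3*(s^2+nb^2))/σ by ring, le_div_iff₀ hσ]
    linarith [key]
  nlinarith [key2, sq_nonneg s, sq_nonneg nb]

end S9aux

open S9aux

/-- second-order perturbation expansion of the squared largest
singular value of the rank-one matrix `C = σuvᵀ` (with `σ > 0` and `u, v` unit):
there exist `δ > 0` and `Λ ≥ 0` such that for `‖E‖_F ≤ δ`,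
`| ‖C+E‖_op² − (σ + uᵀEv)² − ‖(I−uuᵀ)Ev‖² − ‖(I−vvᵀ)Eᵀu‖² | ≤ Λ‖E‖_F³`. -/
theorem statement9 (M N : ℕ) (u : Fin M → ℝ) (v : Fin N → ℝ)
    (hu : vnormSq u = 1) (hv : vnormSq v = 1) (σ : ℝ) (hσ : 0 < σ)
    (C : Matrix (Fin M) (Fin N) ℝ) (hC : C = σ • vecMulVec u v) :
    ∃ δ : ℝ, 0 < δ ∧ ∃ Λ : ℝ, 0 ≤ Λ ∧
      ∀ E : Matrix (Fin M) (Fin N) ℝ, Real.sqrt (frobSq E) ≤ δ →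
        |opNorm (C + E) ^ 2 - (σ + vdot u (E.mulVec v)) ^ 2
            - vnormSq (((1 : Matrix (Fin M) (Fin M) ℝ) - vecMulVec u u).mulVec (E.mulVec v))
            - vnormSq (((1 : Matrix (Fin N) (Fin N) ℝ) - vecMulVec v v).mulVec (Eᵀ.mulVec u))|
          ≤ Λ * Real.sqrt (frobSq E) ^ 3 := by
  refine ⟨σ/8, by positivity, 80/σ, by positivity, ?_⟩
  intro E hE
  have hu' : vdot u u = 1 := by rw [← vnormSq_eq_vdot, hu]
  have hv' : vdot v v = 1 := by rw [← vnormSq_eq_vdot, hv]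
  set ε := Real.sqrt (frobSq E) with hεdef
  have hfE : 0 ≤ frobSq E := frobSq_nonneg E
  have hε0 : 0 ≤ ε := Real.sqrt_nonneg _
  have hε2 : ε ^ 2 = frobSq E := Real.sq_sqrt hfE
  have hδ : ε ≤ σ / 8 := hE
  set d := vdot u (E.mulVec v) with hd
  set s := σ + d with hsdef
  set Ev := E.mulVec v with hEvdef
  set Etu := Eᵀ.mulVec u with hEtudef
  set a := Ev - d • u with hadef
  set b := Etu - d • v with hbdef
  -- basic norm bounds
  have hEv2 : vnormSq Ev ≤ ε ^ 2 := by
    have h := mulVec_normSq_le E v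
    rw [hv, mul_one] at h
    rw [hε2]; exact h
  have hEtu2 : vnormSq Etu ≤ ε ^ 2 := by
    have h := mulVec_normSq_le Eᵀ u
    rw [hu, mul_one, frobSq_transpose] at h
    rw [hε2]; exact h
  have hd2 : d ^ 2 ≤ ε ^ 2 := by
    have h := cauchy u Ev
    rw [hu, one_mul] at h
    exact le_trans h hEv2
  have hdabs : |d| ≤ ε := by
    have h := Real.sqrt_le_sqrt hd2
    rwa [Real.sqrt_sq_eq_abs, Real.sqrt_sq hε0] at h
  have hdabs' := abs_le.1 hdabs
  have hs_lb : σ - ε ≤ s := by rw [hsdef]; linarith [hdabs'.1]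
  have hs_ub : s ≤ σ + ε := by rw [hsdef]; linarith [hdabs'.2]
  have hs0 : 0 < s := by linarith
  -- orthogonality
  have huEv : vdot u Ev = d := hd.symm
  have hua : vdot u a = 0 := by
    rw [hadef, vdot_sub_right, vdot_smul_right, hu', huEv]; ring
  have hvEtu : vdot v Etu = d := by
    rw [hEtudef, vdot_mulVec, Matrix.transpose_transpose, vdot_comm, ← hEvdef, huEv]
  have hvb : vdot v b = 0 := by
    rw [hbdef, vdot_sub_right, vdot_smul_right, hv', hvEtu]; ring
  have hEva : Ev = a + d • u := by rw [hadef]; abel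
  have hEtub : Etu = b + d • v := by rw [hbdef]; abel
  -- na, nb
  set na := Real.sqrt (vnormSq a) with hnadef
  set nb := Real.sqrt (vnormSq b) with hnbdef
  have hna0 : 0 ≤ na := Real.sqrt_nonneg _
  have hnb0 : 0 ≤ nb := Real.sqrt_nonneg _
  have hna2 : na ^ 2 = vnormSq a := Real.sq_sqrt (vnormSq_nonneg a)
  have hnb2 : nb ^ 2 = vnormSq b := Real.sq_sqrt (vnormSq_nonneg b)
  have hvnsa : vnormSq a ≤ ε ^ 2 := by
    have h : vnormSq a = vnormSq Ev - d ^ 2 := by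
      rw [hadef, ← huEv]; exact proj_normSq u Ev hu
    rw [h]; linarith [sq_nonneg d, hEv2]
  have hvnsb : vnormSq b ≤ ε ^ 2 := by
    have h : vnormSq b = vnormSq Etu - d ^ 2 := by
      rw [hbdef, ← hvEtu]; exact proj_normSq v Etu hv
    rw [h]; linarith [sq_nonneg d, hEtu2]
  have hna : na ≤ ε := by
    have h := Real.sqrt_le_sqrt hvnsa
    rwa [Real.sqrt_sq hε0, ← hnadef] at h
  have hnb : nb ≤ ε := by
    have h := Real.sqrt_le_sqrt hvnsb
    rwa [Real.sqrt_sq hε0, ← hnbdef] at h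
  clear_value ε d s na nb
  -- rewrite goal projections
  have hgoal1 : ((1 : Matrix (Fin M) (Fin M) ℝ) - vecMulVec u u).mulVec Ev = a := by
    rw [Matrix.sub_mulVec, Matrix.one_mulVec, vecMulVec_mulVec, huEv, hadef]
  have hgoal2 : ((1 : Matrix (Fin N) (Fin N) ℝ) - vecMulVec v v).mulVec Etu = b := by
    rw [Matrix.sub_mulVec, Matrix.one_mulVec, vecMulVec_mulVec, hvEtu, hbdef]
  rw [hgoal1, hgoal2]
  set A := C + E with hA
  -- universal upper bound on vnormSq (A x) for unit x
  have Hub : ∀ x : Fin N → ℝ, vnormSq x = 1 →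
      vnormSq (A.mulVec x) ≤ s^2 + vnormSq a + vnormSq b + (80/σ)*ε^3 := by
    intro x hx
    set β := vdot v x with hβdef
    set y := x - β • v with hydef
    have hvy : vdot v y = 0 := by
      rw [hydef, vdot_sub_right, vdot_smul_right, hv', hβdef]; ring
    have hxy : x = β • v + y := by rw [hydef]; abel
    have hy2 : vnormSq y = 1 - β ^ 2 := by
      have h := vnormSq_add (β • v) y
      rw [← hxy, hx, vnormSq_smul, hv, vdot_smul_left, hvy] at h
      linarith
    set t := Real.sqrt (vnormSq y) with htdef
    have ht0 : 0 ≤ t := Real.sqrt_nonneg _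
    have ht2 : t ^ 2 = vnormSq y := Real.sq_sqrt (vnormSq_nonneg y)
    have hβt : β ^ 2 + t ^ 2 = 1 := by rw [ht2, hy2]; ring
    set g := vdot u (E.mulVec y) with hgdef
    have hgb : g = vdot b y := by
      rw [hgdef, vdot_mulVec, ← hEtudef, hEtub, vdot_add_left, vdot_smul_left, hvy]
      ring
    clear_value β t g
    have hEx : E.mulVec x = β • Ev + E.mulVec y := by
      conv_lhs => rw [hxy]
      rw [Matrix.mulVec_add, Matrix.mulVec_smul, hEvdef]
    have hdecomp : A.mulVec x = (β * s + g) • u + (β • a + (E.mulVec y - g • u)) := by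
      rw [hA, Matrix.add_mulVec, hC, Matrix.smul_mulVec, vecMulVec_mulVec,
        ← hβdef, hEx, hEva]
      funext i
      simp only [Pi.add_apply, Pi.smul_apply, Pi.sub_apply, smul_eq_mul, hsdef]
      ring
    have horth : vdot u (β • a + (E.mulVec y - g • u)) = 0 := by
      rw [vdot_add_right, vdot_smul_right, hua, vdot_sub_right, vdot_smul_right, hu',
        hgdef]
      ring
    have hsplit : vnormSq (A.mulVec x)
        = (β * s + g) ^ 2 + vnormSq (β • a + (E.mulVec y - g • u)) := by
      rw [hdecomp, vnormSq_add, vnormSq_smul, hu, vdot_smul_left, horth]; ring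
    have hEy : vnormSq (E.mulVec y) ≤ ε ^ 2 * t ^ 2 := by
      have h := mulVec_normSq_le E y
      rw [← hε2, ← ht2] at h; exact h
    have hpn : vnormSq (E.mulVec y - g • u) ≤ ε ^ 2 * t ^ 2 := by
      have h : vnormSq (E.mulVec y - g • u) = vnormSq (E.mulVec y) - g ^ 2 := by
        rw [hgdef]; exact proj_normSq u (E.mulVec y) hu
      rw [h]; linarith [sq_nonneg g, hEy]
    have hpt : Real.sqrt (vnormSq (E.mulVec y - g • u)) ≤ ε * t := by
      rw [show ε ^ 2 * t ^ 2 = (ε * t) ^ 2 by ring] at hpn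
      have h := Real.sqrt_le_sqrt hpn
      rwa [Real.sqrt_sq (mul_nonneg hε0 ht0)] at h
    have hap : |vdot a (E.mulVec y - g • u)| ≤ na * (ε * t) := by
      refine le_trans (abs_vdot_le _ _) ?_
      rw [← hnadef]
      exact mul_le_mul_of_nonneg_left hpt hna0
    have hgy : |g| ≤ nb * t := by
      rw [hgb]
      refine le_trans (abs_vdot_le _ _) ?_
      rw [← hnbdef, ← htdef]
    have hβ1 : β ^ 2 ≤ 1 := by linarith [sq_nonneg t]
    have hβabs : |β| ≤ 1 := by
      have h := Real.sqrt_le_sqrt hβ1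
      rwa [Real.sqrt_sq_eq_abs, Real.sqrt_one] at h
    have hβ' := abs_le.1 hβabs
    have hg' := abs_le.1 hgy
    have hap' := abs_le.1 hap
    have e1 : (β * s + g) ^ 2 ≤ β^2*s^2 + 2*s*(nb*t) + nb^2*t^2 :=
      e1_lemma s β g nb t hs0.le hβabs hgy
    have e2 : vnormSq (β • a + (E.mulVec y - g • u))
        ≤ β^2 * vnormSq a + 2*na*ε*t + ε^2*t^2 := by
      rw [vnormSq_add, vnormSq_smul, vdot_smul_left]
      have hβa : β * vdot a (E.mulVec y - g • u) ≤ na*(ε*t) :=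
        mul_le_of_abs _ _ _ hβabs hap
      linarith [hpn, hβa]
    have hfinal : vnormSq (A.mulVec x)
        ≤ β^2*s^2 + 2*s*nb*t + nb^2*t^2 + β^2*(vnormSq a) + 2*na*ε*t + ε^2*t^2 := by
      rw [hsplit]; linarith [e1, e2]
    have hku := key_upper σ s na nb ε t β hσ hε0 hδ hna0 hna hnb0 hnb hs_lb ht0 hβt
    rw [← hna2] at hfinal
    rw [← hna2, ← hnb2]
    linarith [hfinal, hku]
  -- the sup set
  set S := {r : ℝ | ∃ x : Fin N → ℝ, vnormSq x = 1 ∧ r = Real.sqrt (vnormSq (A.mulVec x))}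
    with hS
  have hopA : opNorm A = sSup S := rfl
  set U := s^2 + vnormSq a + vnormSq b + (80/σ)*ε^3 with hUdef
  clear_value U
  have hU0 : 0 ≤ U := by
    have h1 : 0 ≤ (80/σ)*ε^3 :=
      mul_nonneg (by positivity) (pow_nonneg hε0 3)
    rw [hUdef]
    linarith [vnormSq_nonneg a, vnormSq_nonneg b, sq_nonneg s, h1]
  have hbdd : BddAbove S := by
    refine ⟨Real.sqrt U, ?_⟩
    rintro r ⟨x, hx1, rfl⟩
    exact Real.sqrt_le_sqrt (Hub x hx1)
  have hne : S.Nonempty := ⟨Real.sqrt (vnormSq (A.mulVec v)), v, hv, rfl⟩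
  have hub : opNorm A ≤ Real.sqrt U := by
    rw [hopA]
    refine csSup_le hne ?_
    rintro r ⟨x, hx1, rfl⟩
    exact Real.sqrt_le_sqrt (Hub x hx1)
  -- lower bound via test vector
  set w0 := s • v + b with hw0def
  have hw0 : vnormSq w0 = s ^ 2 + vnormSq b := by
    rw [hw0def, vnormSq_add, vnormSq_smul, hv, vdot_smul_left, hvb]; ring
  have hr2pos : 0 < s ^ 2 + vnormSq b := by
    have h := pow_pos hs0 2
    linarith [vnormSq_nonneg b]
  set r := Real.sqrt (s ^ 2 + vnormSq b) with hrdef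
  have hrpos : 0 < r := Real.sqrt_pos.2 hr2pos
  have hr2 : r ^ 2 = s ^ 2 + vnormSq b := Real.sq_sqrt hr2pos.le
  clear_value r
  set x₀ := r⁻¹ • w0 with hx₀def
  have hx₀ : vnormSq x₀ = 1 := by
    rw [hx₀def, vnormSq_smul, hw0, ← hr2, inv_pow]
    field_simp
  have hAv : A.mulVec v = s • u + a := by
    rw [hA, Matrix.add_mulVec, hC, Matrix.smul_mulVec, vecMulVec_mulVec, hv',
      ← hEvdef, hEva]
    funext i
    simp only [Pi.add_apply, Pi.smul_apply, smul_eq_mul, hsdef]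
    ring
  have hAb : A.mulVec b = E.mulVec b := by
    rw [hA, Matrix.add_mulVec, hC, Matrix.smul_mulVec, vecMulVec_mulVec, hvb]
    funext i
    simp only [Pi.add_apply, Pi.smul_apply, smul_eq_mul]
    ring
  have hg2 : vdot u (E.mulVec b) = vnormSq b := by
    rw [vdot_mulVec, ← hEtudef, hEtub, vdot_add_left, vdot_smul_left,
      hvb, ← vnormSq_eq_vdot]
    ring
  have hAw0 : A.mulVec w0
      = (s ^ 2 + vnormSq b) • u + (s • a + (E.mulVec b - vnormSq b • u)) := by
    rw [hw0def, Matrix.mulVec_add, Matrix.mulVec_smul, hAv, hAb]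
    funext i
    simp only [Pi.add_apply, Pi.smul_apply, Pi.sub_apply, smul_eq_mul]
    ring
  have horth2 : vdot u (s • a + (E.mulVec b - vnormSq b • u)) = 0 := by
    rw [vdot_add_right, vdot_smul_right, hua, vdot_sub_right, vdot_smul_right, hu', hg2]
    ring
  have hAw0n : vnormSq (A.mulVec w0)
      = (s ^ 2 + vnormSq b) ^ 2 + vnormSq (s • a + (E.mulVec b - vnormSq b • u)) := by
    rw [hAw0, vnormSq_add, vnormSq_smul, hu, vdot_smul_left, horth2]; ring
  have hEb : vnormSq (E.mulVec b) ≤ ε ^ 2 * vnormSq b := by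
    have h := mulVec_normSq_le E b
    rw [← hε2] at h; exact h
  have hwn : vnormSq (E.mulVec b - vnormSq b • u) ≤ (ε * nb) ^ 2 := by
    have h : vnormSq (E.mulVec b - vnormSq b • u)
        = vnormSq (E.mulVec b) - (vnormSq b) ^ 2 := by
      rw [← hg2]; exact proj_normSq u (E.mulVec b) hu
    rw [h]
    have : ε ^ 2 * vnormSq b = (ε * nb) ^ 2 := by rw [← hnb2]; ring
    linarith [sq_nonneg (vnormSq b), hEb, this]
  have hwt : Real.sqrt (vnormSq (E.mulVec b - vnormSq b • u)) ≤ ε * nb := by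
    have h := Real.sqrt_le_sqrt hwn
    rwa [Real.sqrt_sq (mul_nonneg hε0 hnb0)] at h
  have haw : |vdot a (E.mulVec b - vnormSq b • u)| ≤ ε ^ 3 := by
    refine le_trans (abs_vdot_le _ _) ?_
    rw [← hnadef]
    calc na * Real.sqrt (vnormSq (E.mulVec b - vnormSq b • u))
        ≤ na * (ε * nb) := mul_le_mul_of_nonneg_left hwt hna0
      _ ≤ ε * (ε * ε) := by
          refine mul_le_mul hna (mul_le_mul_of_nonneg_left hnb hε0)
            (mul_nonneg hε0 hnb0) hε0
      _ = ε ^ 3 := by ring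
  have haw' := abs_le.1 haw
  have hz : s ^ 2 * vnormSq a - 2 * s * ε ^ 3
      ≤ vnormSq (s • a + (E.mulVec b - vnormSq b • u)) := by
    rw [vnormSq_add, vnormSq_smul, vdot_smul_left]
    have h1 : -(s * ε ^ 3) ≤ s * vdot a (E.mulVec b - vnormSq b • u) := by
      have := mul_le_mul_of_nonneg_left haw'.1 hs0.le
      linarith [this]
    linarith [vnormSq_nonneg (E.mulVec b - vnormSq b • u), h1]
  have hkl := key_lower σ s na nb ε hσ hε0 hδ hna0 hna hnb0 hnb hs_lb hs_ub
  rw [hna2, hnb2] at hkl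
  have hlow0 : (s^2 + vnormSq a + vnormSq b - (80/σ)*ε^3) * (s^2 + vnormSq b)
      ≤ vnormSq (A.mulVec w0) := by
    rw [hAw0n]; linarith [hz, hkl]
  have hAx₀ : vnormSq (A.mulVec x₀) = (s^2 + vnormSq b)⁻¹ * vnormSq (A.mulVec w0) := by
    have h : A.mulVec x₀ = r⁻¹ • A.mulVec w0 := by
      rw [hx₀def]; exact Matrix.mulVec_smul A r⁻¹ w0
    rw [h, vnormSq_smul, inv_pow, hr2]
  have hlow : s^2 + vnormSq a + vnormSq b - (80/σ)*ε^3 ≤ vnormSq (A.mulVec x₀) := by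
    rw [hAx₀, ← div_eq_inv_mul, le_div_iff₀ hr2pos]
    exact hlow0
  have hTerr0 : 0 ≤ s^2 + vnormSq a + vnormSq b - (80/σ)*ε^3 := by
    have h1 : ε ^ 3 ≤ (σ/8) ^ 3 := pow_le_pow_left₀ hε0 hδ 3
    have h2 : (80/σ) * ε^3 ≤ (80/σ) * (σ/8)^3 :=
      mul_le_mul_of_nonneg_left h1 (by positivity)
    have h3 : (80/σ) * (σ/8)^3 = (5/32) * σ^2 := by field_simp; ring
    have h4 : (7*σ/8)^2 ≤ s^2 := by
      have h5 : 7*σ/8 ≤ s := by linarith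
      exact pow_le_pow_left₀ (by positivity) h5 2
    linarith [vnormSq_nonneg a, vnormSq_nonneg b, h2, h4]
  have hmem : Real.sqrt (vnormSq (A.mulVec x₀)) ∈ S := ⟨x₀, hx₀, rfl⟩
  have hlb : Real.sqrt (vnormSq (A.mulVec x₀)) ≤ opNorm A := by
    rw [hopA]; exact le_csSup hbdd hmem
  have hop0 : 0 ≤ opNorm A := le_trans (Real.sqrt_nonneg _) hlb
  have hup2 : opNorm A ^ 2 ≤ U := by
    have h := pow_le_pow_left₀ hop0 hub 2
    rwa [Real.sq_sqrt hU0] at h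
  have hlo2 : s^2 + vnormSq a + vnormSq b - (80/σ)*ε^3 ≤ opNorm A ^ 2 := by
    have h1 : Real.sqrt (s^2 + vnormSq a + vnormSq b - (80/σ)*ε^3)
        ≤ Real.sqrt (vnormSq (A.mulVec x₀)) := Real.sqrt_le_sqrt hlow
    have h2 := le_trans h1 hlb
    have h3 := pow_le_pow_left₀ (Real.sqrt_nonneg _) h2 2
    rwa [Real.sq_sqrt hTerr0] at h3
  rw [abs_le]
  constructor
  · rw [hUdef] at hup2; linarith [hlo2]
  · rw [hUdef] at hup2; linarith [hup2]

end
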